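/- arXiv:0802.1234 — 6 statements merged into one kernel-verified Lean document; each statement's English description precedes it below -/
import Mathlib

section
/- If f : ℝ → ℝ is convex on a convex set K ⊆ ℝ, then its perspective g(x,t) = t·f(x/t), defined on {(x,t) : t > 0, x/t ∈ K}, is jointly convex: for 0 ≤ c ≤ 1 and (x₁,t₁),(x₂,t₂) in the domain, g(c·x₁+(1-c)·x₂, c·t₁+(1-c)·t₂) ≤ c·g(x₁,t₁) + (1-c)·g(x₂,t₂). -/
/-!
With `t = a t₁ + b t₂`, the point `(a x₁ + b x₂) / t` is the convex combination of `x₁ / t₁`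
and `x₂ / t₂` with weights `a t₁ / t` and `b t₂ / t`. Convexity of `f` bounds `f` there, and
multiplying by `t` turns these weights back into `a t₁` and `b t₂`.
-/

section Perspective

variable (𝕜 : Type*) {E β : Type*} [Field 𝕜] [AddCommGroup E] [Module 𝕜 E]

def perspectiveDomain [LT 𝕜] (K : Set E) : Set (E × 𝕜) :=
  {p | 0 < p.2 ∧ p.2⁻¹ • p.1 ∈ K}

def perspective [AddCommMonoid β] [Module 𝕜 β] (f : E → β) (p : E × 𝕜) : β :=
  p.2 • f (p.2⁻¹ • p.1)

variable {𝕜}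

theorem inv_smul_add_smul_eq_perspective {t₁ t₂ : 𝕜} (ht₁ : t₁ ≠ 0) (ht₂ : t₂ ≠ 0)
    (a b : 𝕜) (x₁ x₂ : E) :
    (a * t₁ + b * t₂)⁻¹ • (a • x₁ + b • x₂) =
      (a * t₁ / (a * t₁ + b * t₂)) • t₁⁻¹ • x₁ + (b * t₂ / (a * t₁ + b * t₂)) • t₂⁻¹ • x₂ := by
  simp only [smul_add, smul_smul]
  congr 2 <;> field_simp

variable [LinearOrder 𝕜] [IsStrictOrderedRing 𝕜]

theorem perspective_weights {t₁ t₂ a b : 𝕜} (ht₁ : 0 < t₁) (ht₂ : 0 < t₂) (ha : 0 ≤ a)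
    (hb : 0 ≤ b) (hab : a + b = 1) :
    0 < a * t₁ + b * t₂ ∧ 0 ≤ a * t₁ / (a * t₁ + b * t₂) ∧ 0 ≤ b * t₂ / (a * t₁ + b * t₂) ∧
      a * t₁ / (a * t₁ + b * t₂) + b * t₂ / (a * t₁ + b * t₂) = 1 := by
  have ht : 0 < a * t₁ + b * t₂ := convex_Ioi (0 : 𝕜) ht₁ ht₂ ha hb hab
  exact ⟨ht, by positivity, by positivity, by rw [← add_div, div_self ht.ne']⟩

theorem ConvexOn.perspective [AddCommMonoid β] [PartialOrder β] [Module 𝕜 β] [PosSMulMono 𝕜 β]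
    {K : Set E} {f : E → β} (hf : ConvexOn 𝕜 K f) :
    ConvexOn 𝕜 (perspectiveDomain 𝕜 K) (perspective 𝕜 f) := by
  refine ⟨?_, ?_⟩ <;>
    rintro ⟨x₁, t₁⟩ ⟨ht₁, hx₁⟩ ⟨x₂, t₂⟩ ⟨ht₂, hx₂⟩ a b ha hb hab <;>
    obtain ⟨ht, hw₁, hw₂, hw⟩ := perspective_weights ht₁ ht₂ ha hb hab <;>
    simp only [perspectiveDomain, _root_.perspective, Set.mem_ofPred_eq, Prod.smul_mk,
      Prod.mk_add_mk, smul_eq_mul, inv_smul_add_smul_eq_perspective ht₁.ne' ht₂.ne']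
  · exact ⟨ht, hf.1 hx₁ hx₂ hw₁ hw₂ hw⟩
  · calc _ ≤ (a * t₁ + b * t₂) • ((a * t₁ / (a * t₁ + b * t₂)) • f (t₁⁻¹ • x₁) +
          (b * t₂ / (a * t₁ + b * t₂)) • f (t₂⁻¹ • x₂)) :=
          smul_le_smul_of_nonneg_left (hf.2 hx₁ hx₂ hw₁ hw₂ hw) ht.le
      _ = a • t₁ • f (t₁⁻¹ • x₁) + b • t₂ • f (t₂⁻¹ • x₂) := by
          simp only [smul_add, smul_smul, mul_div_cancel₀ _ ht.ne']

end Perspective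

theorem perspective_jointly_convex_general (K : Set ℝ) (f : ℝ → ℝ)
    (hf : ConvexOn ℝ K f) (g : ℝ × ℝ → ℝ)
    (hg : ∀ x t : ℝ, 0 < t → x / t ∈ K → g (x, t) = t * f (x / t))
    (c : ℝ) (hc0 : 0 ≤ c) (hc1 : c ≤ 1)
    (x₁ t₁ x₂ t₂ : ℝ) (ht₁ : 0 < t₁) (ht₂ : 0 < t₂)
    (hx₁ : x₁ / t₁ ∈ K) (hx₂ : x₂ / t₂ ∈ K) :
    g (c * x₁ + (1 - c) * x₂, c * t₁ + (1 - c) * t₂) ≤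
      c * g (x₁, t₁) + (1 - c) * g (x₂, t₂) := by
  have hp₁ : (x₁, t₁) ∈ perspectiveDomain ℝ K := ⟨ht₁, by rwa [smul_eq_mul, ← div_eq_inv_mul]⟩
  have hp₂ : (x₂, t₂) ∈ perspectiveDomain ℝ K := ⟨ht₂, by rwa [smul_eq_mul, ← div_eq_inv_mul]⟩
  have hc : 0 ≤ 1 - c := sub_nonneg.2 hc1
  have hmem := hf.perspective.1 hp₁ hp₂ hc0 hc (add_sub_cancel c 1)
  have hle := hf.perspective.2 hp₁ hp₂ hc0 hc (add_sub_cancel c 1)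
  simp only [perspectiveDomain, _root_.perspective, Set.mem_ofPred_eq, Prod.smul_mk, Prod.mk_add_mk, smul_eq_mul,
    ← div_eq_inv_mul] at hmem hle
  rw [hg _ _ hmem.1 hmem.2, hg _ _ ht₁ hx₁, hg _ _ ht₂ hx₂]
  exact hle

/-- The perspective `g (x, t) = t * f (x / t)` of a convex function `f` on a convex set
`K ⊆ ℝ` is jointly convex on `{(x, t) | t > 0 ∧ x / t ∈ K}`. -/
theorem perspective_jointly_convex (K : Set ℝ) (hK : Convex ℝ K) (f : ℝ → ℝ)
    (hf : ConvexOn ℝ K f) (g : ℝ × ℝ → ℝ)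
    (hg : ∀ x t : ℝ, 0 < t → x / t ∈ K → g (x, t) = t * f (x / t))
    (c : ℝ) (hc0 : 0 ≤ c) (hc1 : c ≤ 1)
    (x₁ t₁ x₂ t₂ : ℝ) (ht₁ : 0 < t₁) (ht₂ : 0 < t₂)
    (hx₁ : x₁ / t₁ ∈ K) (hx₂ : x₂ / t₂ ∈ K) :
    g (c * x₁ + (1 - c) * x₂, c * t₁ + (1 - c) * t₂) ≤
      c * g (x₁, t₁) + (1 - c) * g (x₂, t₂) :=
  perspective_jointly_convex_general K f hf g hg c hc0 hc1 x₁ t₁ x₂ t₂ ht₁ ht₂ hx₁ hx₂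
end

section
/- (Hansen–Pedersen–Jensen, affine version) If f : [a,b] → ℝ is matrix convex, T₁, T₂ are n×n self-adjoint matrices with spectra in [a,b], and A, B are n×n matrices with A*A + B*B = I, then f(A*T₁A + B*T₂B) ≤ A*f(T₁)A + B*f(T₂)B in the Loewner order. -/
open Matrix ComplexOrder

/-!
Put `V = [A; B]`, an isometry since `Vᴴ V = Aᴴ A + Bᴴ B = 1`, and `S = T₁ ⊕ T₂`. Then
`Vᴴ S V = Aᴴ T₁ A + Bᴴ T₂ B` and `Vᴴ f(S) V = Aᴴ f(T₁) A + Bᴴ f(T₂) B`, so the claim is the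
inequality `f(Vᴴ S V) ≤ Vᴴ f(S) V` for an isometry `V`. The reflection `U = 1 - 2 V Vᴴ` is a
self-adjoint unitary with `U V = -V`, and the midpoint `R = (S + U S U) / 2` satisfies
`R V = V (Vᴴ S V)`, hence `f(R) V = V f(Vᴴ S V)`. Compressing the convexity inequality
`f(R) ≤ (f(S) + U f(S) U) / 2` by `V` gives the claim.

Intertwining relations `M V = V X` pass to `f(M) V = V f(X)` because on the finitely many
eigenvalues of `M` and `X` the function `f` agrees with a polynomial.
-/

/-- `f` is matrix convex on `I`: for every `n` and all Hermitian `n × n` matrices with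
spectra in `I`, `f (c • S + (1 - c) • T) ≤ c • f S + (1 - c) • f T` in the Loewner order,
where `f` is applied via the continuous functional calculus. -/
def MatrixConvexOn (I : Set ℝ) (f : ℝ → ℝ) : Prop :=
  ∀ (m : ℕ) (S T : Matrix (Fin m) (Fin m) ℂ), S.IsHermitian → T.IsHermitian →
    spectrum ℝ S ⊆ I → spectrum ℝ T ⊆ I → ∀ c : ℝ, 0 ≤ c → c ≤ 1 →
    (c • cfc f S + (1 - c) • cfc f T - cfc f (c • S + (1 - c) • T)).PosSemidef

namespace Matrix

variable {m n : Type*}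

theorem conjTranspose_fromRows_mul_fromBlocks_zero_mul_fromRows [Fintype m] {α : Type*}
    [Semiring α] [StarRing α] (A B : Matrix m n α) (G₁ G₂ : Matrix m m α) :
    (fromRows A B)ᴴ * fromBlocks G₁ 0 0 G₂ * fromRows A B = Aᴴ * G₁ * A + Bᴴ * G₂ * B := by
  rw [Matrix.mul_assoc, fromBlocks_mul_fromRows, conjTranspose_fromRows_eq_fromCols_conjTranspose,
    fromCols_mul_fromRows]
  simp only [Matrix.zero_mul, add_zero, zero_add, Matrix.mul_assoc]

variable {𝕜 : Type*} [RCLike 𝕜]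

def reflection [Fintype n] [DecidableEq m] (V : Matrix m n 𝕜) : Matrix m m 𝕜 :=
  1 - (2 : 𝕜) • (V * Vᴴ)

theorem isHermitian_reflection [Fintype n] [DecidableEq m] (V : Matrix m n 𝕜) :
    (reflection V).IsHermitian := by
  simp [reflection, IsHermitian, conjTranspose_smul]

variable [Fintype m] [Fintype n] [DecidableEq m] [DecidableEq n]

section Intertwining

open Polynomial

theorem pow_mul_eq_mul_pow_of_mul_eq {α : Type*} [Semiring α] {M : Matrix m m α}
    {X : Matrix n n α} {V : Matrix m n α} (h : M * V = V * X) (k : ℕ) :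
    M ^ k * V = V * X ^ k := by
  induction k with
  | zero => simp
  | succ k ih =>
    rw [pow_succ', Matrix.mul_assoc, ih, ← Matrix.mul_assoc, h, Matrix.mul_assoc, ← pow_succ']

theorem aeval_mul_eq_mul_aeval_of_mul_eq {R α : Type*} [CommSemiring R] [Semiring α]
    [Algebra R α] {M : Matrix m m α} {X : Matrix n n α} {V : Matrix m n α} (h : M * V = V * X)
    (p : R[X]) : aeval M p * V = V * aeval X p := by
  simp only [aeval_eq_sum_range, Matrix.sum_mul, Matrix.mul_sum, Matrix.smul_mul,
    Matrix.mul_smul, pow_mul_eq_mul_pow_of_mul_eq h]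

theorem cfc_mul_eq_mul_cfc_of_mul_eq (f : ℝ → ℝ) {M : Matrix m m 𝕜}
    {X : Matrix n n 𝕜} (hM : M.IsHermitian) (hX : X.IsHermitian) {V : Matrix m n 𝕜}
    (h : M * V = V * X) : cfc f M * V = V * cfc f X := by
  obtain ⟨q, hq⟩ : ∃ q : ℝ[X], ∀ x : ↥(spectrum ℝ M ∪ spectrum ℝ X), q.eval ↑x = f x :=
    (exists_eval_eq_iff _ _).mpr fun _ _ hxy => by rw [hxy]
  have hMq : cfc f M = aeval M q :=
    (cfc_congr fun x hx => (hq ⟨x, .inl hx⟩).symm).trans (cfc_polynomial q M hM.isSelfAdjoint)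
  have hXq : cfc f X = aeval X q :=
    (cfc_congr fun x hx => (hq ⟨x, .inr hx⟩).symm).trans (cfc_polynomial q X hX.isSelfAdjoint)
  rw [hMq, hXq, aeval_mul_eq_mul_aeval_of_mul_eq h]

end Intertwining

theorem spectrum_fromBlocks_zero {R α : Type*} [CommSemiring R] [CommRing α] [Algebra R α]
    (A : Matrix m m α) (D : Matrix n n α) :
    spectrum R (fromBlocks A 0 0 D) = spectrum R A ∪ spectrum R D := by
  ext r
  have hblocks : algebraMap R _ r - fromBlocks A 0 0 D
      = fromBlocks (algebraMap R _ r - A) 0 0 (algebraMap R _ r - D) := by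
    ext (i | i) (j | j) <;> simp [algebraMap_eq_diagonal, diagonal_apply]
  simp only [Set.mem_union, spectrum.mem_iff, hblocks, isUnit_iff_isUnit_det,
    det_fromBlocks_zero₂₁, IsUnit.mul_iff, not_and_or]

theorem cfc_fromBlocks_zero (f : ℝ → ℝ) {A : Matrix m m 𝕜} {D : Matrix n n 𝕜}
    (hA : A.IsHermitian) (hD : D.IsHermitian) :
    cfc f (fromBlocks A 0 0 D) = fromBlocks (cfc f A) 0 0 (cfc f D) := by
  have hS : (fromBlocks A 0 0 D).IsHermitian := hA.fromBlocks (by simp) hD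
  let ι₁ : Matrix (m ⊕ n) m 𝕜 := fromRows 1 0
  let ι₂ : Matrix (m ⊕ n) n 𝕜 := fromRows 0 1
  have h₁ : cfc f (fromBlocks A 0 0 D) * ι₁ = fromRows (cfc f A) 0 := by
    rw [cfc_mul_eq_mul_cfc_of_mul_eq f hS hA (by simp [ι₁, fromBlocks_mul_fromRows, fromRows_mul])]
    simp [ι₁, fromRows_mul]
  have h₂ : cfc f (fromBlocks A 0 0 D) * ι₂ = fromRows 0 (cfc f D) := by
    rw [cfc_mul_eq_mul_cfc_of_mul_eq f hS hD (by simp [ι₂, fromBlocks_mul_fromRows, fromRows_mul])]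
    simp [ι₂, fromRows_mul]
  calc cfc f (fromBlocks A 0 0 D)
      = cfc f (fromBlocks A 0 0 D) * fromCols ι₁ ι₂ := by simp [ι₁, ι₂, fromBlocks_one]
    _ = fromBlocks (cfc f A) 0 0 (cfc f D) := by
        rw [mul_fromCols, h₁, h₂, fromCols_fromRows_eq_fromBlocks]

theorem cfc_mul_mul_conjTranspose_of_mem_unitaryGroup (f : ℝ → ℝ) {S U : Matrix m m 𝕜}
    (hS : S.IsHermitian) (hU : U ∈ unitaryGroup m 𝕜) :
    cfc f (U * S * Uᴴ) = U * cfc f S * Uᴴ := by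
  have hUU : Uᴴ * U = 1 := hU.1
  have hUU' : U * Uᴴ = 1 := hU.2
  have h : cfc f (U * S * Uᴴ) * U = U * cfc f S :=
    cfc_mul_eq_mul_cfc_of_mul_eq f (isHermitian_mul_mul_conjTranspose U hS) hS
      (by rw [Matrix.mul_assoc, hUU, Matrix.mul_one])
  rw [← h, Matrix.mul_assoc _ U, hUU', Matrix.mul_one]

section Isometry

variable {V : Matrix m n 𝕜} (hV : Vᴴ * V = 1)
include hV

theorem reflection_mul : reflection V * V = -V := by
  simp only [reflection, Matrix.sub_mul, Matrix.smul_mul, Matrix.one_mul, Matrix.mul_assoc, hV,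
    Matrix.mul_one]
  module

theorem reflection_mem_unitaryGroup : reflection V ∈ unitaryGroup m 𝕜 := by
  have hP : V * Vᴴ * (V * Vᴴ) = V * Vᴴ := by
    rw [Matrix.mul_assoc, ← Matrix.mul_assoc Vᴴ, hV, Matrix.one_mul]
  rw [mem_unitaryGroup_iff, star_eq_conjTranspose, (isHermitian_reflection V).eq]
  simp only [reflection, Matrix.sub_mul, Matrix.mul_sub, Matrix.smul_mul, Matrix.mul_smul,
    Matrix.one_mul, Matrix.mul_one, hP]
  module

theorem reflection_mul_mul_conjTranspose_mul (S : Matrix m m 𝕜) :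
    reflection V * S * (reflection V)ᴴ * V = (2 : 𝕜) • (V * (Vᴴ * S * V)) - S * V := by
  rw [(isHermitian_reflection V).eq, Matrix.mul_assoc, reflection_mul hV]
  simp only [reflection, Matrix.mul_neg, Matrix.sub_mul, Matrix.smul_mul, Matrix.one_mul,
    Matrix.mul_assoc]
  abel

end Isometry

end Matrix

theorem MatrixConvexOn.posSemidef {I : Set ℝ} {f : ℝ → ℝ} (hf : MatrixConvexOn I f)
    {m : Type*} [Fintype m] [DecidableEq m] {S T : Matrix m m ℂ} (hS : S.IsHermitian)
    (hT : T.IsHermitian) (hSI : spectrum ℝ S ⊆ I) (hTI : spectrum ℝ T ⊆ I) {c : ℝ} (hc₀ : 0 ≤ c)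
    (hc₁ : c ≤ 1) :
    (c • cfc f S + (1 - c) • cfc f T - cfc f (c • S + (1 - c) • T)).PosSemidef := by
  let φ : Matrix m m ℂ ≃⋆ₐ[ℝ] Matrix (Fin _) (Fin _) ℂ :=
    .ofAlgEquiv (reindexAlgEquiv ℝ ℂ (Fintype.equivFin m))
      fun M => (conjTranspose_submatrix M _ _).symm
  have hφ : Continuous φ := continuous_id.matrix_reindex _ _
  have hφ_cfc : ∀ M : Matrix m m ℂ, IsSelfAdjoint M → cfc f (φ M) = φ (cfc f M) := fun M hM =>
    (StarAlgHomClass.map_cfc φ f M (finite_real_spectrum.continuousOn f) hφ hM (hM.map φ)).symm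
  have h := hf _ (φ S) (φ T) (hS.submatrix _) (hT.submatrix _)
    ((AlgEquiv.spectrum_eq φ S).trans_subset hSI) ((AlgEquiv.spectrum_eq φ T).trans_subset hTI)
    c hc₀ hc₁
  rw [← map_smul φ c S, ← map_smul φ (1 - c) T, ← map_add, hφ_cfc S hS, hφ_cfc T hT,
    hφ_cfc _ (by cfc_tac), ← map_smul, ← map_smul, ← map_add, ← map_sub] at h
  simpa [φ, coe_reindexAlgEquiv] using (posSemidef_submatrix_equiv _).mp h

theorem MatrixConvexOn.posSemidef_conjTranspose_mul_cfc_mul_sub {I : Set ℝ} {f : ℝ → ℝ}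
    (hf : MatrixConvexOn I f) {m n : Type*} [Fintype m] [DecidableEq m] [Fintype n]
    [DecidableEq n] {S : Matrix m m ℂ} (hS : S.IsHermitian) (hSI : spectrum ℝ S ⊆ I)
    {V : Matrix m n ℂ} (hV : Vᴴ * V = 1) :
    (Vᴴ * cfc f S * V - cfc f (Vᴴ * S * V)).PosSemidef := by
  set U := reflection V
  have hUH : Uᴴ = U := (isHermitian_reflection V).eq
  have hU : U ∈ unitaryGroup m ℂ := reflection_mem_unitaryGroup hV
  have hUV : U * V = -V := reflection_mul hV
  have hVU : Vᴴ * U = -Vᴴ := by rw [← hUH, ← conjTranspose_mul, hUV, conjTranspose_neg]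
  have hUSU : (U * S * Uᴴ).IsHermitian := isHermitian_mul_mul_conjTranspose U hS
  have hconv := hf.posSemidef hS hUSU hSI
    ((Unitary.spectrum_star_right_conjugate (U := ⟨U, hU⟩)).trans_subset hSI)
    (c := 1 / 2) (by norm_num) (by norm_num)
  set R := (1 / 2 : ℝ) • S + (1 - 1 / 2 : ℝ) • (U * S * Uᴴ)
  have hRV : R * V = V * (Vᴴ * S * V) := by
    rw [Matrix.add_mul, Matrix.smul_mul, Matrix.smul_mul, reflection_mul_mul_conjTranspose_mul hV]
    module
  have hR : R.IsHermitian := (hS.smul (.all _)).add (hUSU.smul (.all _))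
  have hfR : Vᴴ * cfc f R * V = cfc f (Vᴴ * S * V) := by
    rw [Matrix.mul_assoc, cfc_mul_eq_mul_cfc_of_mul_eq f hR
      (isHermitian_conjTranspose_mul_mul V hS) hRV, ← Matrix.mul_assoc, hV, Matrix.one_mul]
  have hUfU : Vᴴ * (U * cfc f S * Uᴴ) * V = Vᴴ * cfc f S * V := by
    rw [hUH, ← Matrix.mul_assoc, ← Matrix.mul_assoc, hVU, Matrix.mul_assoc, hUV]
    simp only [Matrix.neg_mul, Matrix.mul_neg, neg_neg]
  rw [cfc_mul_mul_conjTranspose_of_mem_unitaryGroup f hS hU] at hconv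
  convert hconv.conjTranspose_mul_mul_same V using 1
  rw [Matrix.mul_sub, Matrix.sub_mul, Matrix.mul_add, Matrix.add_mul, Matrix.mul_smul,
    Matrix.mul_smul, Matrix.smul_mul, Matrix.smul_mul, hUfU, hfR]
  module

theorem hpj_affine_general (a b : ℝ) (f : ℝ → ℝ)
    (hconv : MatrixConvexOn (Set.Icc a b) f) (n : ℕ)
    (T₁ T₂ A B : Matrix (Fin n) (Fin n) ℂ)
    (hT₁ : T₁.IsHermitian) (hT₂ : T₂.IsHermitian)
    (hsp₁ : spectrum ℝ T₁ ⊆ Set.Icc a b) (hsp₂ : spectrum ℝ T₂ ⊆ Set.Icc a b)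
    (hAB : Aᴴ * A + Bᴴ * B = 1) :
    (Aᴴ * cfc f T₁ * A + Bᴴ * cfc f T₂ * B
      - cfc f (Aᴴ * T₁ * A + Bᴴ * T₂ * B)).PosSemidef := by
  have hV : (fromRows A B)ᴴ * fromRows A B = 1 := by
    rw [conjTranspose_fromRows_eq_fromCols_conjTranspose, fromCols_mul_fromRows, hAB]
  have hS : (fromBlocks T₁ 0 0 T₂).IsHermitian := hT₁.fromBlocks (by simp) hT₂
  have hSI : spectrum ℝ (fromBlocks T₁ 0 0 T₂) ⊆ Set.Icc a b := by
    rw [spectrum_fromBlocks_zero]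
    exact Set.union_subset hsp₁ hsp₂
  have h := hconv.posSemidef_conjTranspose_mul_cfc_mul_sub hS hSI hV
  rwa [cfc_fromBlocks_zero f hT₁ hT₂, conjTranspose_fromRows_mul_fromBlocks_zero_mul_fromRows,
    conjTranspose_fromRows_mul_fromBlocks_zero_mul_fromRows] at h

/-- Hansen–Pedersen–Jensen inequality, affine version: if `f` is matrix convex on
`[a, b]`, `T₁, T₂` are Hermitian with spectra in `[a, b]` and `Aᴴ A + Bᴴ B = 1`, then
`f (Aᴴ T₁ A + Bᴴ T₂ B) ≤ Aᴴ f(T₁) A + Bᴴ f(T₂) B` in the Loewner order. -/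
theorem hpj_affine (a b : ℝ) (f : ℝ → ℝ) (hf : ContinuousOn f (Set.Icc a b))
    (hconv : MatrixConvexOn (Set.Icc a b) f) (n : ℕ)
    (T₁ T₂ A B : Matrix (Fin n) (Fin n) ℂ)
    (hT₁ : T₁.IsHermitian) (hT₂ : T₂.IsHermitian)
    (hsp₁ : spectrum ℝ T₁ ⊆ Set.Icc a b) (hsp₂ : spectrum ℝ T₂ ⊆ Set.Icc a b)
    (hAB : Aᴴ * A + Bᴴ * B = 1) :
    (Aᴴ * cfc f T₁ * A + Bᴴ * cfc f T₂ * B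
      - cfc f (Aᴴ * T₁ * A + Bᴴ * T₂ * B)).PosSemidef :=
  hpj_affine_general a b f hconv n T₁ T₂ A B hT₁ hT₂ hsp₁ hsp₂ hAB
end

section
/- (Hansen–Pedersen–Jensen, subhomogeneous version) If f : I → ℝ is matrix convex on an interval I containing 0 with f(0) ≤ 0, T₁, T₂ are self-adjoint matrices with spectra in I, and A, B satisfy A*A + B*B ≤ I, then f(A*T₁A + B*T₂B) ≤ A*f(T₁)A + B*f(T₂)B. -/
open Matrix ComplexOrder

/-!
Hansen–Pedersen dilation argument. Complete the contraction `K = [A; B]` to the isometry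
`V = [A; B; C]` with `Cᴴ C = 1 - Aᴴ A - Bᴴ B`, and dilate `V` to the self-adjoint unitary
`U = [[0, Vᴴ], [V, 1 - V Vᴴ]]`, so that `Vᴴ X V` is the `(1,1)` block of `U diag(0, X) U`.
Averaging a matrix with its conjugate by `diag(-1, 1)` yields its block diagonal, so matrix
convexity gives `f` of the `(1,1)` block `≤` the `(1,1)` block of `f`, i.e.
`f (Vᴴ X V) ≤ Vᴴ f(X) V`. For `X = diag(T₁, T₂, 0)` the right-hand side is
`Aᴴ f(T₁) A + Bᴴ f(T₂) B + f(0) Cᴴ C`, and `f 0 ≤ 0` disposes of the last term.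
-/

open scoped MatrixOrder

theorem Polynomial.exists_eqOn_eval {F : Type*} [Field F] {s : Set F} (hs : s.Finite)
    (f : F → F) : ∃ p : Polynomial F, Set.EqOn p.eval f s := by
  classical
  exact ⟨Lagrange.interpolate hs.toFinset id f, fun _ hx =>
    Lagrange.eval_interpolate_at_node f (Set.injOn_id _) (hs.mem_toFinset.mpr hx)⟩

theorem spectrum.zero_subset_singleton {R A : Type*} [Field R] [Ring A] [Algebra R A] :
    spectrum R (0 : A) ⊆ {0} := by
  intro x hx
  by_contra hx0
  rw [spectrum.mem_iff, sub_zero] at hx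
  exact hx ((isUnit_iff_ne_zero.mpr hx0).map _)

namespace Matrix

theorem toBlocks₁₁_le_toBlocks₁₁ {k l 𝕜 : Type*} [RCLike 𝕜] {M N : Matrix (k ⊕ l) (k ⊕ l) 𝕜}
    (h : M ≤ N) : M.toBlocks₁₁ ≤ N.toBlocks₁₁ :=
  le_iff.mpr ((le_iff.mp h).submatrix Sum.inl)

theorem conjTranspose_fromRows_mul_fromBlocks_mul_fromRows {k l m α : Type*} [Fintype l]
    [Fintype m] [Semiring α] [StarRing α] (A : Matrix m k α) (B : Matrix l k α)
    (P : Matrix m m α) (Q : Matrix l l α) :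
    (fromRows A B)ᴴ * fromBlocks P 0 0 Q * fromRows A B = Aᴴ * P * A + Bᴴ * Q * B := by
  rw [conjTranspose_fromRows_eq_fromCols_conjTranspose, Matrix.mul_assoc, fromBlocks_mul_fromRows,
    fromCols_mul_fromRows]
  simp [Matrix.mul_assoc]

def reindexStarAlgEquiv (R : Type*) {k l α : Type*} [Fintype k] [DecidableEq k] [Fintype l]
    [DecidableEq l] [CommSemiring R] [Semiring α] [StarRing α] [Algebra R α] (e : k ≃ l) :
    Matrix k k α ≃⋆ₐ[R] Matrix l l α :=
  StarAlgEquiv.ofAlgEquiv (reindexAlgEquiv R α e) fun M => (conjTranspose_submatrix M _ _).symm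

variable {k l m : Type*} [Fintype k] [DecidableEq k] [Fintype l] [DecidableEq l]
  [Fintype m] [DecidableEq m]

theorem aeval_fromBlocks_zero {R α : Type*} [CommSemiring R] [CommSemiring α] [Algebra R α]
    (S : Matrix k k α) (T : Matrix l l α) (p : Polynomial R) :
    Polynomial.aeval (fromBlocks S 0 0 T) p =
      fromBlocks (Polynomial.aeval S p) 0 0 (Polynomial.aeval T p) := by
  induction p using Polynomial.induction_on' with
  | add p q hp hq => simp [hp, hq, fromBlocks_add]
  | monomial n a => simp [fromBlocks_diagonal_pow, ← Algebra.smul_def, fromBlocks_smul]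

theorem spectrum_fromBlocks_zero_s4 {R 𝕜 : Type*} [CommSemiring R] [Field 𝕜] [Algebra R 𝕜]
    (S : Matrix k k 𝕜) (T : Matrix l l 𝕜) :
    spectrum R (fromBlocks S 0 0 T) = spectrum R S ∪ spectrum R T := by
  ext x
  have h : algebraMap R _ x - fromBlocks S 0 0 T =
      fromBlocks (algebraMap R _ x - S) 0 0 (algebraMap R _ x - T) := by
    ext (i | i) (j | j) <;> simp [Algebra.algebraMap_eq_smul_one, one_apply]
  simp only [spectrum.mem_iff, h, isUnit_iff_isUnit_det, det_fromBlocks_zero₂₁,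
    IsUnit.mul_iff, Set.mem_union]
  tauto

variable {𝕜 : Type*} [RCLike 𝕜]

/-- On a finite spectrum `f` agrees with an interpolating polynomial, and polynomials act
blockwise. -/
theorem cfc_fromBlocks_zero_s4 (f : ℝ → ℝ) {S : Matrix k k 𝕜} {T : Matrix l l 𝕜}
    (hS : S.IsHermitian) (hT : T.IsHermitian) :
    cfc f (fromBlocks S 0 0 T) = fromBlocks (cfc f S) 0 0 (cfc f T) := by
  obtain ⟨p, hp⟩ := Polynomial.exists_eqOn_eval
    (s := spectrum ℝ S ∪ spectrum ℝ T) (finite_real_spectrum.union finite_real_spectrum) f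
  have hST : (fromBlocks S 0 0 T).IsHermitian := hS.fromBlocks conjTranspose_zero hT
  rw [← cfc_congr (a := fromBlocks S 0 0 T) (by rwa [spectrum_fromBlocks_zero_s4]),
    ← cfc_congr (a := S) (hp.mono Set.subset_union_left),
    ← cfc_congr (a := T) (hp.mono Set.subset_union_right),
    cfc_polynomial p (fromBlocks S 0 0 T), cfc_polynomial p S, cfc_polynomial p T,
    aeval_fromBlocks_zero]

theorem cfc_map_starAlgEquiv (φ : Matrix k k 𝕜 ≃⋆ₐ[ℝ] Matrix l l 𝕜) (f : ℝ → ℝ)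
    {A : Matrix k k 𝕜} (hA : A.IsHermitian) : cfc f (φ A) = φ (cfc f A) :=
  (StarAlgHomClass.map_cfc φ f A (finite_real_spectrum.continuousOn f)
    (LinearMap.continuous_of_finiteDimensional φ.toAlgEquiv.toLinearMap) hA
    (hA.isSelfAdjoint.map φ)).symm

def isometryDilation (V : Matrix m k 𝕜) : Matrix (k ⊕ m) (k ⊕ m) 𝕜 :=
  fromBlocks 0 Vᴴ V (1 - V * Vᴴ)

theorem isometryDilation_mem_unitary {V : Matrix m k 𝕜} (hV : Vᴴ * V = 1) :
    isometryDilation V ∈ unitary (Matrix (k ⊕ m) (k ⊕ m) 𝕜) := by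
  have hstar : star (isometryDilation V) = isometryDilation V := by
    simp [isometryDilation, star_eq_conjTranspose, fromBlocks_conjTranspose]
  have hsq : isometryDilation V * isometryDilation V = 1 := by
    have hVVV : Vᴴ * (V * Vᴴ) = Vᴴ := by rw [← Matrix.mul_assoc, hV, Matrix.one_mul]
    simp only [isometryDilation, fromBlocks_multiply, ← fromBlocks_one]
    congr 1 <;> simp [Matrix.mul_sub, Matrix.sub_mul, Matrix.mul_assoc, hV, hVVV]
  rw [Unitary.mem_iff, hstar, hsq]
  exact ⟨rfl, rfl⟩

theorem toBlocks₁₁_isometryDilation_mul (V : Matrix m k 𝕜) (Z : Matrix k k 𝕜)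
    (X : Matrix m m 𝕜) :
    (isometryDilation V * fromBlocks Z 0 0 X * star (isometryDilation V)).toBlocks₁₁ =
      Vᴴ * X * V := by
  simp [isometryDilation, star_eq_conjTranspose, fromBlocks_conjTranspose, fromBlocks_multiply]

end Matrix

namespace MatrixConvexOn

variable {I : Set ℝ} {f : ℝ → ℝ} {k l m : Type*} [Fintype k] [DecidableEq k] [Fintype l]
  [DecidableEq l] [Fintype m] [DecidableEq m]

/-- `MatrixConvexOn` only quantifies over `Fin n`-indexed matrices; reindexing transports it to
any finite index type. -/
theorem cfc_smul_add_smul_le (hf : MatrixConvexOn I f) {S T : Matrix k k ℂ}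
    (hS : S.IsHermitian) (hT : T.IsHermitian) (hSI : spectrum ℝ S ⊆ I) (hTI : spectrum ℝ T ⊆ I)
    {c : ℝ} (hc₀ : 0 ≤ c) (hc₁ : c ≤ 1) :
    cfc f (c • S + (1 - c) • T) ≤ c • cfc f S + (1 - c) • cfc f T := by
  let φ := reindexStarAlgEquiv ℝ (α := ℂ) (Fintype.equivFin k)
  have hST : (c • S + (1 - c) • T).IsHermitian :=
    ((IsSelfAdjoint.all c).smul hS).add ((IsSelfAdjoint.all (1 - c)).smul hT)
  have h := hf _ (φ S) (φ T) (hS.submatrix _) (hT.submatrix _)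
    (by rwa [AlgEquiv.spectrum_eq]) (by rwa [AlgEquiv.spectrum_eq]) c hc₀ hc₁
  rw [← map_smul, ← map_smul, ← map_add, cfc_map_starAlgEquiv φ f hST, cfc_map_starAlgEquiv φ f hS,
    cfc_map_starAlgEquiv φ f hT, ← map_smul, ← map_smul, ← map_add, ← map_sub] at h
  exact le_iff.mpr ((posSemidef_submatrix_equiv _).mp h)

/-- Averaging `M` with its conjugate by `diag(-1, 1)` yields its block diagonal. -/
theorem cfc_toBlocks₁₁_le (hf : MatrixConvexOn I f) {M : Matrix (k ⊕ l) (k ⊕ l) ℂ}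
    (hM : M.IsHermitian) (hMI : spectrum ℝ M ⊆ I) :
    cfc f M.toBlocks₁₁ ≤ (cfc f M).toBlocks₁₁ := by
  let w : unitary (Matrix (k ⊕ l) (k ⊕ l) ℂ) :=
    ⟨fromBlocks (-1) 0 0 1, by simp [Unitary.mem_iff, star_eq_conjTranspose,
      fromBlocks_conjTranspose, fromBlocks_multiply, fromBlocks_one]⟩
  let φ := Unitary.conjStarAlgAut ℝ _ w
  have hflip (N : Matrix (k ⊕ l) (k ⊕ l) ℂ) :
      φ N = fromBlocks N.toBlocks₁₁ (-N.toBlocks₁₂) (-N.toBlocks₂₁) N.toBlocks₂₂ := by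
    conv_lhs => rw [← fromBlocks_toBlocks N]
    simp [φ, w, star_eq_conjTranspose, fromBlocks_conjTranspose, fromBlocks_multiply]
  have hpinch (N : Matrix (k ⊕ l) (k ⊕ l) ℂ) : (1 / 2 : ℝ) • N + (1 - 1 / 2 : ℝ) • φ N =
      fromBlocks N.toBlocks₁₁ 0 0 N.toBlocks₂₂ := by
    rw [hflip]
    ext (i | i) (j | j) <;> simp [toBlocks₁₁, toBlocks₁₂, toBlocks₂₁, toBlocks₂₂] <;> ring
  have h := hf.cfc_smul_add_smul_le hM (hM.isSelfAdjoint.map φ) hMI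
    (by rwa [AlgEquiv.spectrum_eq]) (c := 1 / 2) (by norm_num) (by norm_num)
  rw [hpinch, cfc_fromBlocks_zero_s4 (S := M.toBlocks₁₁) (T := M.toBlocks₂₂) f (hM.submatrix Sum.inl)
    (hM.submatrix Sum.inr), cfc_map_starAlgEquiv φ f hM, hpinch] at h
  simpa using toBlocks₁₁_le_toBlocks₁₁ h

theorem cfc_conjTranspose_mul_mul_le_of_isometry (hf : MatrixConvexOn I f) (h0 : 0 ∈ I)
    {V : Matrix m k ℂ} (hV : Vᴴ * V = 1) {X : Matrix m m ℂ} (hX : X.IsHermitian)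
    (hXI : spectrum ℝ X ⊆ I) :
    cfc f (Vᴴ * X * V) ≤ Vᴴ * cfc f X * V := by
  let φ := Unitary.conjStarAlgAut ℝ _ ⟨isometryDilation V, isometryDilation_mem_unitary hV⟩
  have hX' : (fromBlocks (0 : Matrix k k ℂ) 0 0 X).IsHermitian :=
    isHermitian_zero.fromBlocks conjTranspose_zero hX
  have h := hf.cfc_toBlocks₁₁_le (hX'.isSelfAdjoint.map φ) (by
    rw [AlgEquiv.spectrum_eq, spectrum_fromBlocks_zero_s4]
    exact Set.union_subset
      (spectrum.zero_subset_singleton.trans (Set.singleton_subset_iff.mpr h0)) hXI)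
  rwa [cfc_map_starAlgEquiv φ f hX', cfc_fromBlocks_zero_s4 f isHermitian_zero hX,
    Unitary.conjStarAlgAut_apply, Unitary.conjStarAlgAut_apply,
    toBlocks₁₁_isometryDilation_mul, toBlocks₁₁_isometryDilation_mul] at h

theorem cfc_conjTranspose_mul_mul_le_of_contraction (hf : MatrixConvexOn I f) (h0 : 0 ∈ I)
    (hf0 : f 0 ≤ 0) {K : Matrix m k ℂ} (hK : (1 - Kᴴ * K).PosSemidef) {X : Matrix m m ℂ}
    (hX : X.IsHermitian) (hXI : spectrum ℝ X ⊆ I) :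
    cfc f (Kᴴ * X * K) ≤ Kᴴ * cfc f X * K := by
  obtain ⟨C, hC⟩ := CStarAlgebra.nonneg_iff_eq_star_mul_self.mp hK.nonneg
  have hV : (fromRows K C)ᴴ * fromRows K C = 1 := by
    rw [conjTranspose_fromRows_eq_fromCols_conjTranspose, fromCols_mul_fromRows,
      ← star_eq_conjTranspose, ← hC]
    abel
  have hX' : (fromBlocks X 0 0 (0 : Matrix k k ℂ)).IsHermitian :=
    hX.fromBlocks conjTranspose_zero isHermitian_zero
  have h := hf.cfc_conjTranspose_mul_mul_le_of_isometry h0 hV hX' (by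
    rw [spectrum_fromBlocks_zero_s4]
    exact Set.union_subset hXI
      (spectrum.zero_subset_singleton.trans (Set.singleton_subset_iff.mpr h0)))
  rw [conjTranspose_fromRows_mul_fromBlocks_mul_fromRows, cfc_fromBlocks_zero_s4 f hX isHermitian_zero,
    cfc_apply_zero, conjTranspose_fromRows_mul_fromBlocks_mul_fromRows] at h
  calc cfc f (Kᴴ * X * K) = cfc f (Kᴴ * X * K + Cᴴ * 0 * C) := by simp
    _ ≤ Kᴴ * cfc f X * K + Cᴴ * algebraMap ℝ _ (f 0) * C := h
    _ = Kᴴ * cfc f X * K + f 0 • (1 - Kᴴ * K) := by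
      rw [hC, Algebra.algebraMap_eq_smul_one]
      simp [star_eq_conjTranspose]
    _ ≤ Kᴴ * cfc f X * K :=
      add_le_of_nonpos_right (smul_nonpos_of_nonpos_of_nonneg hf0 hK.nonneg)

end MatrixConvexOn

theorem hpj_subhomogeneous_general (I : Set ℝ) (h0 : (0 : ℝ) ∈ I)
    (f : ℝ → ℝ) (hf0 : f 0 ≤ 0)
    (hconv : MatrixConvexOn I f) (n : ℕ)
    (T₁ T₂ A B : Matrix (Fin n) (Fin n) ℂ)
    (hT₁ : T₁.IsHermitian) (hT₂ : T₂.IsHermitian)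
    (hsp₁ : spectrum ℝ T₁ ⊆ I) (hsp₂ : spectrum ℝ T₂ ⊆ I)
    (hAB : (1 - (Aᴴ * A + Bᴴ * B)).PosSemidef) :
    (Aᴴ * cfc f T₁ * A + Bᴴ * cfc f T₂ * B
      - cfc f (Aᴴ * T₁ * A + Bᴴ * T₂ * B)).PosSemidef := by
  have hK : (1 - (fromRows A B)ᴴ * fromRows A B).PosSemidef := by
    rwa [conjTranspose_fromRows_eq_fromCols_conjTranspose, fromCols_mul_fromRows]
  have h := hconv.cfc_conjTranspose_mul_mul_le_of_contraction h0 hf0 hK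
    (hT₁.fromBlocks conjTranspose_zero hT₂)
    (by rw [spectrum_fromBlocks_zero_s4]; exact Set.union_subset hsp₁ hsp₂)
  rw [cfc_fromBlocks_zero_s4 f hT₁ hT₂, conjTranspose_fromRows_mul_fromBlocks_mul_fromRows,
    conjTranspose_fromRows_mul_fromBlocks_mul_fromRows] at h
  exact le_iff.mp h

/-- Hansen–Pedersen–Jensen inequality, subhomogeneous version: if `f` is matrix convex
on an interval `I` containing `0` with `f 0 ≤ 0`, and `Aᴴ A + Bᴴ B ≤ 1`, then
`f (Aᴴ T₁ A + Bᴴ T₂ B) ≤ Aᴴ f(T₁) A + Bᴴ f(T₂) B` in the Loewner order. -/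
theorem hpj_subhomogeneous (I : Set ℝ) (hI : I.OrdConnected) (h0 : (0 : ℝ) ∈ I)
    (f : ℝ → ℝ) (hf : ContinuousOn f I) (hf0 : f 0 ≤ 0)
    (hconv : MatrixConvexOn I f) (n : ℕ)
    (T₁ T₂ A B : Matrix (Fin n) (Fin n) ℂ)
    (hT₁ : T₁.IsHermitian) (hT₂ : T₂.IsHermitian)
    (hsp₁ : spectrum ℝ T₁ ⊆ I) (hsp₂ : spectrum ℝ T₂ ⊆ I)
    (hAB : (1 - (Aᴴ * A + Bᴴ * B)).PosSemidef) :
    (Aᴴ * cfc f T₁ * A + Bᴴ * cfc f T₂ * B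
      - cfc f (Aᴴ * T₁ * A + Bᴴ * T₂ * B)).PosSemidef :=
  hpj_subhomogeneous_general I h0 f hf0 hconv n T₁ T₂ A B hT₁ hT₂ hsp₁ hsp₂ hAB
end

section
/- (Lieb–Ruskai) The quantum relative entropy S(ρ‖σ) = Trace(ρ log ρ - ρ log σ) is jointly convex on pairs of strictly positive definite n×n density matrices: for 0 ≤ c ≤ 1, S(cρ₁+(1-c)ρ₂ ‖ cσ₁+(1-c)σ₂) ≤ c·S(ρ₁‖σ₁) + (1-c)·S(ρ₂‖σ₂). -/
/-!
For `l ≥ 0` let `Z_l` solve the Sylvester equation `l A Z + Z B = A`. In the eigenbases of `A`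
and `B`, with eigenvalues `aᵢ`, `bⱼ` and overlap weights `wᵢⱼ = |⟨uᵢ, vⱼ⟩|²`, one finds
`Re Tr (A Z_l) = ∑ wᵢⱼ aᵢ² / (l aᵢ + bⱼ)` and `Re Tr (A log A - A log B) = ∑ wᵢⱼ aᵢ (log aᵢ - log bⱼ)`,
so the scalar identity `∫₀^∞ (a / (l a + b) - 1 / (1 + l)) dl = log a - log b` gives
`S(A‖B) = ∫₀^∞ (Re Tr (A Z_l) - Re Tr A / (1 + l)) dl`.

Since `X ↦ l A X + X B` is a positive operator for the Hilbert–Schmidt inner product,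
`Re Tr (A Z_l)` is the maximum over `Y` of `2 Re Tr (A Y) - Re Tr (Yᴴ (l A Y + Y B))`. For fixed `Y`
this is linear in `(A, B)`, so `Re Tr (A Z_l)` is jointly convex, and so is the integrand.
-/

open Matrix ComplexOrder MeasureTheory Set Filter Topology

namespace Real

variable {a b : ℝ}

lemma hasDerivAt_log_mul_add_sub_log_one_add (ha : 0 < a) (hb : 0 < b) {l : ℝ} (hl : 0 ≤ l) :
    HasDerivAt (fun t => log (t * a + b) - log (1 + t)) (a / (l * a + b) - 1 / (1 + l)) l := by
  have hlin : HasDerivAt (fun t => t * a + b) a l := by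
    simpa using ((hasDerivAt_id l).mul_const a).add_const b
  have hone : HasDerivAt (fun t => 1 + t) 1 l := (hasDerivAt_id l).const_add 1
  exact (hlin.log (by positivity)).sub (hone.log (by positivity))

lemma tendsto_log_mul_add_sub_log_one_add (ha : 0 < a) :
    Tendsto (fun t => log (t * a + b) - log (1 + t)) atTop (𝓝 (log a)) := by
  have hquot : Tendsto (fun t : ℝ => a + (b - a) / (1 + t)) atTop (𝓝 a) := by
    simpa using (tendsto_const_nhds (x := a)).add ((tendsto_const_nhds (x := b - a)).div_atTop
      (tendsto_atTop_add_const_left _ 1 (tendsto_id (α := ℝ))))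
  refine ((continuousAt_log ha.ne').tendsto.comp hquot).congr' ?_
  have hlin : Tendsto (fun t => t * a + b) atTop atTop :=
    tendsto_atTop_add_const_right _ b (tendsto_id.atTop_mul_const ha)
  filter_upwards [eventually_gt_atTop 0, hlin.eventually_gt_atTop 0] with t ht0 hta
  rw [Function.comp_apply, ← log_div hta.ne' (by positivity)]
  congr 1
  field_simp
  ring

lemma integrableOn_Ioi_div_mul_add_sub_one_div_one_add (ha : 0 < a) (hb : 0 < b) :
    IntegrableOn (fun l => a / (l * a + b) - 1 / (1 + l)) (Ioi 0) := by
  have hderiv := fun l (hl : l ∈ Ici (0 : ℝ)) => hasDerivAt_log_mul_add_sub_log_one_add ha hb hl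
  have hlim := tendsto_log_mul_add_sub_log_one_add (b := b) ha
  rcases le_total b a with hba | hab
  · refine integrableOn_Ioi_deriv_of_nonneg' hderiv (fun l (hl : 0 < l) => ?_) hlim
    rw [sub_nonneg, div_le_div_iff₀ (by positivity) (by positivity)]
    nlinarith
  · refine integrableOn_Ioi_deriv_of_nonpos' hderiv (fun l (hl : 0 < l) => ?_) hlim
    rw [sub_nonpos, div_le_div_iff₀ (by positivity) (by positivity)]
    nlinarith

lemma integral_Ioi_div_mul_add_sub_one_div_one_add (ha : 0 < a) (hb : 0 < b) :
    ∫ l in Ioi 0, (a / (l * a + b) - 1 / (1 + l)) = log a - log b := by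
  rw [integral_Ioi_of_hasDerivAt_of_tendsto'
    (fun l hl => hasDerivAt_log_mul_add_sub_log_one_add ha hb hl)
    (integrableOn_Ioi_div_mul_add_sub_one_div_one_add ha hb)
    (tendsto_log_mul_add_sub_log_one_add ha)]
  simp

end Real

namespace Matrix

lemma PosDef.smul_add_one_sub_smul {m : Type*} {A B : Matrix m m ℂ} (hA : A.PosDef)
    (hB : B.PosDef) {c : ℝ} (hc0 : 0 ≤ c) (hc1 : c ≤ 1) : (c • A + (1 - c) • B).PosDef := by
  rcases hc0.eq_or_lt with rfl | hc
  · simpa using hB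
  · exact (hA.smul hc).add_posSemidef (hB.posSemidef.smul (sub_nonneg.2 hc1))

variable {ι : Type*} [Fintype ι]

noncomputable def sylvesterMap (A B : Matrix ι ι ℂ) (l : ℝ) : Matrix ι ι ℂ →ₗ[ℂ] Matrix ι ι ℂ :=
  l • LinearMap.mulLeft ℂ A + LinearMap.mulRight ℂ B

lemma sylvesterMap_apply (A B : Matrix ι ι ℂ) (l : ℝ) (X : Matrix ι ι ℂ) :
    sylvesterMap A B l X = l • (A * X) + X * B :=
  rfl

section Variational

variable {A B : Matrix ι ι ℂ} {l : ℝ}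

lemma IsHermitian.re_trace_conjTranspose_mul (hA : A.IsHermitian) (Y : Matrix ι ι ℂ) :
    (trace (Yᴴ * A)).re = (trace (A * Y)).re := by
  rw [← hA.eq, ← conjTranspose_mul, trace_conjTranspose, hA.eq, Complex.star_def, Complex.conj_re]

lemma trace_conjTranspose_mul_sylvesterMap (hA : A.IsHermitian) (hB : B.IsHermitian)
    (X Y : Matrix ι ι ℂ) :
    trace (Xᴴ * sylvesterMap A B l Y) = trace ((sylvesterMap A B l X)ᴴ * Y) := by
  simp only [sylvesterMap_apply, conjTranspose_add, conjTranspose_smul, conjTranspose_mul, hA.eq,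
    hB.eq, star_trivial, Matrix.mul_add, Matrix.add_mul, Matrix.mul_smul, Matrix.smul_mul,
    trace_add, trace_smul, Matrix.mul_assoc]
  congr 1
  rw [← Matrix.mul_assoc, trace_mul_comm]

lemma re_trace_conjTranspose_mul_sylvesterMap_self_nonneg (hA : A.PosSemidef) (hB : B.PosSemidef)
    (hl : 0 ≤ l) (X : Matrix ι ι ℂ) : 0 ≤ (trace (Xᴴ * sylvesterMap A B l X)).re := by
  have hAX : 0 ≤ (trace (Xᴴ * A * X)).re :=
    (Complex.le_def.mp (hA.conjTranspose_mul_mul_same X).trace_nonneg).1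
  have hXB : 0 ≤ (trace (X * B * Xᴴ)).re :=
    (Complex.le_def.mp (hB.mul_mul_conjTranspose_same X).trace_nonneg).1
  rw [sylvesterMap_apply, Matrix.mul_add, trace_add, Complex.add_re, Matrix.mul_smul, trace_smul,
    Complex.smul_re, ← Matrix.mul_assoc, trace_mul_comm Xᴴ]
  exact add_nonneg (smul_nonneg hl hAX) hXB

noncomputable def sylvesterObjective (A B : Matrix ι ι ℂ) (l : ℝ) (Y : Matrix ι ι ℂ) : ℝ :=
  2 * (trace (A * Y)).re - (trace (Yᴴ * sylvesterMap A B l Y)).re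

lemma sylvesterObjective_eq_of_sylvesterMap_eq (hA : A.IsHermitian) {Z : Matrix ι ι ℂ}
    (hZ : sylvesterMap A B l Z = A) : sylvesterObjective A B l Z = (trace (A * Z)).re := by
  rw [sylvesterObjective, hZ, hA.re_trace_conjTranspose_mul]
  ring

lemma sylvesterObjective_le_of_sylvesterMap_eq (hA : A.PosSemidef) (hB : B.PosSemidef)
    (hl : 0 ≤ l) {Z : Matrix ι ι ℂ} (hZ : sylvesterMap A B l Z = A) (Y : Matrix ι ι ℂ) :
    sylvesterObjective A B l Y ≤ (trace (A * Z)).re := by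
  have hpos := re_trace_conjTranspose_mul_sylvesterMap_self_nonneg hA hB hl (Z - Y)
  have hcross : (trace (Zᴴ * sylvesterMap A B l Y)).re = (trace (A * Y)).re := by
    rw [trace_conjTranspose_mul_sylvesterMap hA.1 hB.1, hZ, hA.1.eq]
  rw [map_sub, hZ, conjTranspose_sub, Matrix.sub_mul, Matrix.mul_sub, Matrix.mul_sub, trace_sub,
    trace_sub, trace_sub, Complex.sub_re, Complex.sub_re, Complex.sub_re,
    hA.1.re_trace_conjTranspose_mul, hA.1.re_trace_conjTranspose_mul, hcross] at hpos
  rw [sylvesterObjective]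
  linarith

lemma sylvesterObjective_smul_add_smul (a b : ℝ) (A₁ A₂ B₁ B₂ : Matrix ι ι ℂ) (l : ℝ)
    (Y : Matrix ι ι ℂ) :
    sylvesterObjective (a • A₁ + b • A₂) (a • B₁ + b • B₂) l Y =
      a * sylvesterObjective A₁ B₁ l Y + b * sylvesterObjective A₂ B₂ l Y := by
  simp only [sylvesterObjective, sylvesterMap_apply, Matrix.add_mul, Matrix.mul_add,
    Matrix.smul_mul, Matrix.mul_smul, smul_add, trace_add, trace_smul, Complex.add_re,
    Complex.smul_re, smul_eq_mul]
  ring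

end Variational

variable [DecidableEq ι] {A B : Matrix ι ι ℂ}

section SchurMultiplier

lemma IsHermitian.cfc_eq_mul_diagonal_mul (hA : A.IsHermitian) (f : ℝ → ℝ) :
    cfc f A = (hA.eigenvectorUnitary : Matrix ι ι ℂ) *
      diagonal (fun i => (f (hA.eigenvalues i) : ℂ)) * (hA.eigenvectorUnitary : Matrix ι ι ℂ)ᴴ := by
  rw [hA.cfc_eq, IsHermitian.cfc, Unitary.conjStarAlgAut_apply, star_eq_conjTranspose]
  rfl

lemma IsHermitian.eigenvectorUnitary_conjTranspose_mul (hA : A.IsHermitian) :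
    (hA.eigenvectorUnitary : Matrix ι ι ℂ)ᴴ * (hA.eigenvectorUnitary : Matrix ι ι ℂ) = 1 :=
  Unitary.coe_star_mul_self _

lemma IsHermitian.eigenvectorUnitary_mul_conjTranspose (hA : A.IsHermitian) :
    (hA.eigenvectorUnitary : Matrix ι ι ℂ) * (hA.eigenvectorUnitary : Matrix ι ι ℂ)ᴴ = 1 :=
  Unitary.coe_mul_star_self _

/-- Written in the eigenbases of `A` and `B`, the `(i, j)` entry of `X` is multiplied by
`K aᵢ bⱼ` (a finite-dimensional double operator integral). -/
noncomputable def schurMultiplier (hA : A.IsHermitian) (hB : B.IsHermitian) (K : ℝ → ℝ → ℝ)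
    (X : Matrix ι ι ℂ) : Matrix ι ι ℂ :=
  (hA.eigenvectorUnitary : Matrix ι ι ℂ) *
    (((hA.eigenvectorUnitary : Matrix ι ι ℂ)ᴴ * X * (hB.eigenvectorUnitary : Matrix ι ι ℂ)) ⊙
      of fun i j => (K (hA.eigenvalues i) (hB.eigenvalues j) : ℂ)) *
    (hB.eigenvectorUnitary : Matrix ι ι ℂ)ᴴ

variable (hA : A.IsHermitian) (hB : B.IsHermitian)

lemma schurMultiplier_const_one (X : Matrix ι ι ℂ) :
    schurMultiplier hA hB (fun _ _ => 1) X = X := by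
  simp only [schurMultiplier, Complex.ofReal_one]
  rw [show (of fun _ _ => (1 : ℂ) : Matrix ι ι ℂ) = of 1 from rfl, hadamard_of_one,
    ← Matrix.mul_assoc, ← Matrix.mul_assoc, hA.eigenvectorUnitary_mul_conjTranspose,
    Matrix.one_mul, Matrix.mul_assoc, hB.eigenvectorUnitary_mul_conjTranspose, Matrix.mul_one]

lemma schurMultiplier_congr {K L : ℝ → ℝ → ℝ}
    (h : ∀ i j, K (hA.eigenvalues i) (hB.eigenvalues j) = L (hA.eigenvalues i) (hB.eigenvalues j))
    (X : Matrix ι ι ℂ) : schurMultiplier hA hB K X = schurMultiplier hA hB L X := by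
  simp only [schurMultiplier, h]

lemma schurMultiplier_add (K L : ℝ → ℝ → ℝ) (X : Matrix ι ι ℂ) :
    schurMultiplier hA hB (K + L) X = schurMultiplier hA hB K X + schurMultiplier hA hB L X := by
  have : (of fun i j => ((K + L) (hA.eigenvalues i) (hB.eigenvalues j) : ℂ)) =
      (of fun i j => (K (hA.eigenvalues i) (hB.eigenvalues j) : ℂ)) +
        of fun i j => (L (hA.eigenvalues i) (hB.eigenvalues j) : ℂ) := by
    ext; simp
  rw [schurMultiplier, this, hadamard_add, Matrix.mul_add, Matrix.add_mul]
  rfl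

lemma schurMultiplier_smul (c : ℝ) (K : ℝ → ℝ → ℝ) (X : Matrix ι ι ℂ) :
    schurMultiplier hA hB (c • K) X = c • schurMultiplier hA hB K X := by
  have : (of fun i j => ((c • K) (hA.eigenvalues i) (hB.eigenvalues j) : ℂ)) =
      c • of fun i j => (K (hA.eigenvalues i) (hB.eigenvalues j) : ℂ) := by
    ext; simp
  rw [schurMultiplier, this, hadamard_smul, Matrix.mul_smul, Matrix.smul_mul]
  rfl

lemma cfc_mul_schurMultiplier (f : ℝ → ℝ) (K : ℝ → ℝ → ℝ) (X : Matrix ι ι ℂ) :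
    cfc f A * schurMultiplier hA hB K X = schurMultiplier hA hB (fun x y => f x * K x y) X := by
  rw [hA.cfc_eq_mul_diagonal_mul, schurMultiplier, schurMultiplier]
  simp only [Matrix.mul_assoc]
  rw [← Matrix.mul_assoc _ (hA.eigenvectorUnitary : Matrix ι ι ℂ),
    hA.eigenvectorUnitary_conjTranspose_mul, Matrix.one_mul, ← Matrix.mul_assoc (diagonal _)]
  congr 2
  ext i j
  simp only [diagonal_mul, hadamard_apply, of_apply, Complex.ofReal_mul]
  ring

lemma schurMultiplier_mul_cfc (g : ℝ → ℝ) (K : ℝ → ℝ → ℝ) (X : Matrix ι ι ℂ) :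
    schurMultiplier hA hB K X * cfc g B = schurMultiplier hA hB (fun x y => K x y * g y) X := by
  rw [hB.cfc_eq_mul_diagonal_mul, schurMultiplier, schurMultiplier]
  simp only [Matrix.mul_assoc]
  rw [← Matrix.mul_assoc _ (hB.eigenvectorUnitary : Matrix ι ι ℂ),
    hB.eigenvectorUnitary_conjTranspose_mul, Matrix.one_mul, ← Matrix.mul_assoc _ (diagonal _)]
  congr 2
  ext i j
  simp only [mul_diagonal, hadamard_apply, of_apply, Complex.ofReal_mul]
  ring

noncomputable def overlapWeight (i j : ι) : ℝ :=
  Complex.normSq (((hA.eigenvectorUnitary : Matrix ι ι ℂ)ᴴ * (hB.eigenvectorUnitary : Matrix ι ι ℂ)) i j)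

lemma re_trace_schurMultiplier_one (K : ℝ → ℝ → ℝ) :
    (trace (schurMultiplier hA hB K 1)).re =
      ∑ i, ∑ j, K (hA.eigenvalues i) (hB.eigenvalues j) * overlapWeight hA hB i j := by
  set G := (hA.eigenvectorUnitary : Matrix ι ι ℂ)ᴴ * (hB.eigenvectorUnitary : Matrix ι ι ℂ)
  have hG : (hB.eigenvectorUnitary : Matrix ι ι ℂ)ᴴ * (hA.eigenvectorUnitary : Matrix ι ι ℂ) = Gᴴ := by
    simp [G, conjTranspose_mul]
  rw [schurMultiplier, trace_mul_cycle, Matrix.mul_one, hG, trace_mul_comm, trace, Complex.re_sum]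
  refine Finset.sum_congr rfl fun i _ => ?_
  rw [diag_apply, mul_apply, Complex.re_sum]
  refine Finset.sum_congr rfl fun j _ => ?_
  rw [hadamard_apply, of_apply, conjTranspose_apply, overlapWeight, mul_right_comm,
    Complex.star_def, Complex.mul_conj, ← Complex.ofReal_mul, Complex.ofReal_re, mul_comm]

lemma mul_schurMultiplier (K : ℝ → ℝ → ℝ) (X : Matrix ι ι ℂ) :
    A * schurMultiplier hA hB K X = schurMultiplier hA hB (fun x y => x * K x y) X := by
  simpa only [cfc_id ℝ A hA.isSelfAdjoint, id_eq] using cfc_mul_schurMultiplier hA hB id K X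

lemma schurMultiplier_mul (K : ℝ → ℝ → ℝ) (X : Matrix ι ι ℂ) :
    schurMultiplier hA hB K X * B = schurMultiplier hA hB (fun x y => K x y * y) X := by
  simpa only [cfc_id ℝ B hB.isSelfAdjoint, id_eq] using schurMultiplier_mul_cfc hA hB id K X

lemma sylvesterMap_schurMultiplier (l : ℝ) (K : ℝ → ℝ → ℝ) (X : Matrix ι ι ℂ) :
    sylvesterMap A B l (schurMultiplier hA hB K X) =
      schurMultiplier hA hB (fun x y => (l * x + y) * K x y) X := by
  rw [sylvesterMap_apply, mul_schurMultiplier, schurMultiplier_mul, ← schurMultiplier_smul,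
    ← schurMultiplier_add]
  congr 1
  funext x y
  simp only [Pi.add_apply, Pi.smul_apply, smul_eq_mul]
  ring

lemma cfc_eq_schurMultiplier (f : ℝ → ℝ) : cfc f A = schurMultiplier hA hB (fun x _ => f x) 1 := by
  simpa only [schurMultiplier_const_one, Matrix.mul_one, mul_one] using
    cfc_mul_schurMultiplier hA hB f (fun _ _ => 1) 1

lemma eq_schurMultiplier : A = schurMultiplier hA hB (fun x _ => x) 1 := by
  simpa only [cfc_id' ℝ A hA.isSelfAdjoint] using cfc_eq_schurMultiplier hA hB (fun x => x)

lemma re_trace_eq_sum_overlapWeight :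
    (trace A).re = ∑ i, ∑ j, hA.eigenvalues i * overlapWeight hA hB i j := by
  conv_lhs => rw [eq_schurMultiplier hA hB]
  exact re_trace_schurMultiplier_one hA hB _

lemma re_trace_mul_log_sub_mul_log :
    (trace (A * cfc Real.log A - A * cfc Real.log B)).re =
      ∑ i, ∑ j, hA.eigenvalues i * (Real.log (hA.eigenvalues i) - Real.log (hB.eigenvalues j)) *
        overlapWeight hA hB i j := by
  have hlogA : A * cfc Real.log A = schurMultiplier hA hB (fun x _ => x * Real.log x) 1 := by
    rw [cfc_eq_schurMultiplier hA hB, mul_schurMultiplier]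
  have hlogB : A * cfc Real.log B = schurMultiplier hA hB (fun x y => x * Real.log y) 1 := by
    conv_lhs => rw [eq_schurMultiplier hA hB]
    exact schurMultiplier_mul_cfc hA hB _ _ _
  rw [hlogA, hlogB, trace_sub, Complex.sub_re, re_trace_schurMultiplier_one,
    re_trace_schurMultiplier_one, ← Finset.sum_sub_distrib]
  refine Finset.sum_congr rfl fun i _ => ?_
  rw [← Finset.sum_sub_distrib]
  refine Finset.sum_congr rfl fun j _ => ?_
  ring

noncomputable def sylvesterSolution (l : ℝ) : Matrix ι ι ℂ :=
  schurMultiplier hA hB (fun x y => x / (l * x + y)) 1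

lemma re_trace_mul_sylvesterSolution (l : ℝ) :
    (trace (A * sylvesterSolution hA hB l)).re =
      ∑ i, ∑ j, hA.eigenvalues i * (hA.eigenvalues i / (l * hA.eigenvalues i + hB.eigenvalues j)) *
        overlapWeight hA hB i j := by
  rw [sylvesterSolution, mul_schurMultiplier, re_trace_schurMultiplier_one]

end SchurMultiplier

section SylvesterSolution

variable {l : ℝ}

lemma sylvesterMap_sylvesterSolution (hA : A.PosDef) (hB : B.PosDef) (hl : 0 ≤ l) :
    sylvesterMap A B l (sylvesterSolution hA.1 hB.1 l) = A := by
  rw [sylvesterSolution, sylvesterMap_schurMultiplier]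
  refine (schurMultiplier_congr hA.1 hB.1 (L := fun x _ => x) (fun i j => ?_) 1).trans
    (eq_schurMultiplier hA.1 hB.1).symm
  have := hA.eigenvalues_pos i
  have := hB.eigenvalues_pos j
  exact mul_div_cancel₀ _ (by positivity)

lemma re_trace_mul_sylvesterSolution_smul_add_smul_le {A₁ A₂ B₁ B₂ : Matrix ι ι ℂ}
    (hA₁ : A₁.PosDef) (hA₂ : A₂.PosDef) (hB₁ : B₁.PosDef) (hB₂ : B₂.PosDef) {a b : ℝ}
    (ha : 0 ≤ a) (hb : 0 ≤ b) (hA : (a • A₁ + b • A₂).PosDef) (hB : (a • B₁ + b • B₂).PosDef)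
    (hl : 0 ≤ l) :
    (trace ((a • A₁ + b • A₂) * sylvesterSolution hA.1 hB.1 l)).re ≤
      a * (trace (A₁ * sylvesterSolution hA₁.1 hB₁.1 l)).re +
        b * (trace (A₂ * sylvesterSolution hA₂.1 hB₂.1 l)).re := by
  set Z := sylvesterSolution hA.1 hB.1 l
  calc (trace ((a • A₁ + b • A₂) * Z)).re
      = sylvesterObjective (a • A₁ + b • A₂) (a • B₁ + b • B₂) l Z :=
        (sylvesterObjective_eq_of_sylvesterMap_eq hA.1 (sylvesterMap_sylvesterSolution hA hB hl)).symm
    _ = a * sylvesterObjective A₁ B₁ l Z + b * sylvesterObjective A₂ B₂ l Z :=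
        sylvesterObjective_smul_add_smul a b A₁ A₂ B₁ B₂ l Z
    _ ≤ _ := by
        gcongr
        · exact sylvesterObjective_le_of_sylvesterMap_eq hA₁.posSemidef hB₁.posSemidef hl
            (sylvesterMap_sylvesterSolution hA₁ hB₁ hl) Z
        · exact sylvesterObjective_le_of_sylvesterMap_eq hA₂.posSemidef hB₂.posSemidef hl
            (sylvesterMap_sylvesterSolution hA₂ hB₂ hl) Z

end SylvesterSolution

noncomputable def relEntropyIntegrand (hA : A.IsHermitian) (hB : B.IsHermitian) (l : ℝ) : ℝ :=
  (trace (A * sylvesterSolution hA hB l)).re - (trace A).re / (1 + l)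

lemma relEntropyIntegrand_eq_sum (hA : A.IsHermitian) (hB : B.IsHermitian) (l : ℝ) :
    relEntropyIntegrand hA hB l =
      ∑ i, ∑ j, hA.eigenvalues i * overlapWeight hA hB i j *
        (hA.eigenvalues i / (l * hA.eigenvalues i + hB.eigenvalues j) - 1 / (1 + l)) := by
  rw [relEntropyIntegrand, re_trace_mul_sylvesterSolution, re_trace_eq_sum_overlapWeight hA hB,
    Finset.sum_div, ← Finset.sum_sub_distrib]
  refine Finset.sum_congr rfl fun i _ => ?_
  rw [Finset.sum_div, ← Finset.sum_sub_distrib]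
  refine Finset.sum_congr rfl fun j _ => ?_
  ring

lemma integrableOn_relEntropyIntegrand (hA : A.PosDef) (hB : B.PosDef) :
    IntegrableOn (relEntropyIntegrand hA.1 hB.1) (Ioi 0) := by
  rw [funext (relEntropyIntegrand_eq_sum hA.1 hB.1)]
  refine integrable_finsetSum _ fun i _ => integrable_finsetSum _ fun j _ => ?_
  exact (Real.integrableOn_Ioi_div_mul_add_sub_one_div_one_add (hA.eigenvalues_pos i)
    (hB.eigenvalues_pos j)).const_mul _

lemma integral_relEntropyIntegrand (hA : A.PosDef) (hB : B.PosDef) :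
    ∫ l in Ioi 0, relEntropyIntegrand hA.1 hB.1 l =
      (trace (A * cfc Real.log A - A * cfc Real.log B)).re := by
  have hint : ∀ i j, IntegrableOn (fun l => hA.1.eigenvalues i * overlapWeight hA.1 hB.1 i j *
      (hA.1.eigenvalues i / (l * hA.1.eigenvalues i + hB.1.eigenvalues j) - 1 / (1 + l))) (Ioi 0) :=
    fun i j => (Real.integrableOn_Ioi_div_mul_add_sub_one_div_one_add (hA.eigenvalues_pos i)
      (hB.eigenvalues_pos j)).const_mul _
  rw [funext (relEntropyIntegrand_eq_sum hA.1 hB.1), re_trace_mul_log_sub_mul_log hA.1 hB.1,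
    integral_finsetSum _ fun i _ => integrable_finsetSum _ fun j _ => hint i j]
  refine Finset.sum_congr rfl fun i _ => ?_
  rw [integral_finsetSum _ fun j _ => hint i j]
  refine Finset.sum_congr rfl fun j _ => ?_
  rw [integral_const_mul, Real.integral_Ioi_div_mul_add_sub_one_div_one_add (hA.eigenvalues_pos i)
    (hB.eigenvalues_pos j)]
  ring

lemma relEntropyIntegrand_smul_add_smul_le {A₁ A₂ B₁ B₂ : Matrix ι ι ℂ}
    (hA₁ : A₁.PosDef) (hA₂ : A₂.PosDef) (hB₁ : B₁.PosDef) (hB₂ : B₂.PosDef) {a b : ℝ}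
    (ha : 0 ≤ a) (hb : 0 ≤ b) (hA : (a • A₁ + b • A₂).PosDef) (hB : (a • B₁ + b • B₂).PosDef)
    {l : ℝ} (hl : 0 ≤ l) :
    relEntropyIntegrand hA.1 hB.1 l ≤
      a * relEntropyIntegrand hA₁.1 hB₁.1 l + b * relEntropyIntegrand hA₂.1 hB₂.1 l := by
  have hZ := re_trace_mul_sylvesterSolution_smul_add_smul_le hA₁ hA₂ hB₁ hB₂ ha hb hA hB hl
  have htr : (trace (a • A₁ + b • A₂)).re / (1 + l) =
      a * ((trace A₁).re / (1 + l)) + b * ((trace A₂).re / (1 + l)) := by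
    simp only [trace_add, trace_smul, Complex.add_re, Complex.smul_re, smul_eq_mul]
    ring
  simp only [relEntropyIntegrand, htr]
  linarith

end Matrix

theorem quantum_relativeEntropy_jointly_convex_general (n : ℕ)
    (S : Matrix (Fin n) (Fin n) ℂ → Matrix (Fin n) (Fin n) ℂ → ℝ)
    (hS : ∀ ρ σ, S ρ σ =
      (Matrix.trace (ρ * cfc Real.log ρ - ρ * cfc Real.log σ)).re)
    (ρ₁ ρ₂ σ₁ σ₂ : Matrix (Fin n) (Fin n) ℂ)
    (hρ₁ : ρ₁.PosDef) (hρ₂ : ρ₂.PosDef) (hσ₁ : σ₁.PosDef) (hσ₂ : σ₂.PosDef)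
    (c : ℝ) (hc0 : 0 ≤ c) (hc1 : c ≤ 1) :
    S (c • ρ₁ + (1 - c) • ρ₂) (c • σ₁ + (1 - c) • σ₂) ≤
      c * S ρ₁ σ₁ + (1 - c) * S ρ₂ σ₂ := by
  have hρ := hρ₁.smul_add_one_sub_smul hρ₂ hc0 hc1
  have hσ := hσ₁.smul_add_one_sub_smul hσ₂ hc0 hc1
  have hint₁ := (integrableOn_relEntropyIntegrand hρ₁ hσ₁).const_mul c
  have hint₂ := (integrableOn_relEntropyIntegrand hρ₂ hσ₂).const_mul (1 - c)
  rw [hS, hS, hS, ← integral_relEntropyIntegrand hρ hσ, ← integral_relEntropyIntegrand hρ₁ hσ₁,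
    ← integral_relEntropyIntegrand hρ₂ hσ₂, ← integral_const_mul, ← integral_const_mul,
    ← integral_add hint₁ hint₂]
  exact setIntegral_mono_on (integrableOn_relEntropyIntegrand hρ hσ) (hint₁.add hint₂)
    measurableSet_Ioi fun l hl => relEntropyIntegrand_smul_add_smul_le hρ₁ hρ₂ hσ₁ hσ₂ hc0
      (sub_nonneg.2 hc1) hρ hσ (le_of_lt hl)

/-- Lieb–Ruskai: the quantum relative entropy
`S(ρ‖σ) = Tr (ρ log ρ - ρ log σ)` is jointly convex on pairs of positive definite
density matrices. -/
theorem quantum_relativeEntropy_jointly_convex (n : ℕ)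
    (S : Matrix (Fin n) (Fin n) ℂ → Matrix (Fin n) (Fin n) ℂ → ℝ)
    (hS : ∀ ρ σ, S ρ σ =
      (Matrix.trace (ρ * cfc Real.log ρ - ρ * cfc Real.log σ)).re)
    (ρ₁ ρ₂ σ₁ σ₂ : Matrix (Fin n) (Fin n) ℂ)
    (hρ₁ : ρ₁.PosDef) (hρ₂ : ρ₂.PosDef) (hσ₁ : σ₁.PosDef) (hσ₂ : σ₂.PosDef)
    (hρ₁t : ρ₁.trace = 1) (hρ₂t : ρ₂.trace = 1)
    (hσ₁t : σ₁.trace = 1) (hσ₂t : σ₂.trace = 1)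
    (c : ℝ) (hc0 : 0 ≤ c) (hc1 : c ≤ 1) :
    S (c • ρ₁ + (1 - c) • ρ₂) (c • σ₁ + (1 - c) • σ₂) ≤
      c * S ρ₁ σ₁ + (1 - c) * S ρ₂ σ₂ :=
  quantum_relativeEntropy_jointly_convex_general n S hS ρ₁ ρ₂ σ₁ σ₂ hρ₁ hρ₂ hσ₁ hσ₂ c hc0 hc1
end

section
/- The function f(x) = x log x (with f(0) = 0) on [0,∞) is operator convex: for n×n positive semidefinite matrices S, T and 0 ≤ c ≤ 1, f(cS+(1-c)T) ≤ c·f(S) + (1-c)·f(T) in the Loewner order. -/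
/-!
For `x ≥ 0` and `t > 0`, `x (x - 1) / ((1 + t) (x + t)) = x / (1 + t) - 1 + t (t + x)⁻¹`, and its
integral over `t ∈ (0, ∞)` is `x log x`. Hence `x log x` is an integral of affine functions of `x`
and of positive multiples of resolvents, and through the spectral decomposition the same holds for
the quadratic forms `⟨v, f(A) v⟩`. Convexity therefore reduces to that of `B ↦ ⟨v, B⁻¹ v⟩` on
positive definite matrices, which holds because
`⟨v, B⁻¹ v⟩ = max_u (2 Re ⟨u, v⟩ - ⟨u, B u⟩)` is a supremum of affine functions of `B`.
-/

open Matrix ComplexOrder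

open MeasureTheory Set Filter Topology Real

noncomputable def xLogXKernel (x t : ℝ) : ℝ := x * (x - 1) / ((1 + t) * (x + t))

lemma xLogXKernel_eq {x t : ℝ} (hx : 0 ≤ x) (ht : 0 < t) :
    xLogXKernel x t = (1 + t)⁻¹ * x - 1 + t * (t + x)⁻¹ := by
  have : 0 < x + t := by positivity
  unfold xLogXKernel
  field_simp
  ring

lemma hasDerivAt_xLogXKernel_primitive {x t : ℝ} (hx : 0 < x) (ht : 0 ≤ t) :
    HasDerivAt (fun s => x * (log (s + 1) - log (s + x))) (xLogXKernel x t) t := by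
  have h1 : t + 1 ≠ 0 := by positivity
  have h2 : t + x ≠ 0 := by positivity
  refine ((((hasDerivAt_id t).add_const 1).log h1).sub
    (((hasDerivAt_id t).add_const x).log h2)).const_mul x |>.congr_deriv ?_
  simp only [id, xLogXKernel]
  field_simp
  ring

lemma tendsto_xLogXKernel_primitive (x : ℝ) :
    Tendsto (fun s => x * (log (s + 1) - log (s + x))) atTop (𝓝 0) := by
  have h := ((tendsto_log_comp_add_sub_log 1).sub (tendsto_log_comp_add_sub_log x)).const_mul x
  rw [sub_self, mul_zero] at h
  exact h.congr fun s => by ring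

lemma integrableOn_xLogXKernel {x : ℝ} (hx : 0 ≤ x) : IntegrableOn (xLogXKernel x) (Ioi 0) := by
  rcases hx.eq_or_lt with rfl | hx
  · have : xLogXKernel 0 = 0 := funext fun t => by simp [xLogXKernel]
    rw [this]; exact integrableOn_zero
  have hderiv := fun t (ht : t ∈ Ici (0 : ℝ)) => hasDerivAt_xLogXKernel_primitive hx ht
  have hlim := tendsto_xLogXKernel_primitive x
  rcases le_total 1 x with h1 | h1
  · refine integrableOn_Ioi_deriv_of_nonneg' hderiv (fun t (ht : 0 < t) => ?_) hlim
    exact div_nonneg (by nlinarith) (by positivity)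
  · refine integrableOn_Ioi_deriv_of_nonpos' hderiv (fun t (ht : 0 < t) => ?_) hlim
    exact div_nonpos_of_nonpos_of_nonneg (by nlinarith) (by positivity)

lemma integral_xLogXKernel {x : ℝ} (hx : 0 ≤ x) : ∫ t in Ioi 0, xLogXKernel x t = x * log x := by
  rcases hx.eq_or_lt with rfl | hx
  · simp [xLogXKernel]
  rw [integral_Ioi_of_hasDerivAt_of_tendsto' (fun t ht => hasDerivAt_xLogXKernel_primitive hx ht)
    (integrableOn_xLogXKernel hx.le) (tendsto_xLogXKernel_primitive x)]
  simp

lemma convexOn_integral {α E : Type*} [MeasurableSpace α] {μ : Measure α} [AddCommMonoid E]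
    [SMul ℝ E] {s : Set E} {Φ : α → E → ℝ} (hs : Convex ℝ s)
    (hΦ : ∀ᵐ t ∂μ, ConvexOn ℝ s (Φ t)) (hint : ∀ x ∈ s, Integrable (fun t => Φ t x) μ) :
    ConvexOn ℝ s (fun x => ∫ t, Φ t x ∂μ) := by
  refine ⟨hs, fun x hx y hy a b ha hb hab => ?_⟩
  simp only [smul_eq_mul, ← integral_const_mul]
  rw [← integral_add ((hint x hx).const_mul a) ((hint y hy).const_mul b)]
  exact integral_mono_ae (hint _ (hs hx hy ha hb hab))
    (((hint x hx).const_mul a).add ((hint y hy).const_mul b))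
    (hΦ.mono fun t ht => ht.2 hx hy ha hb hab)

namespace Matrix

variable {𝕜 : Type*} [RCLike 𝕜] {ι : Type*}

lemma convex_posSemidef : Convex ℝ {A : Matrix ι ι 𝕜 | A.PosSemidef} :=
  fun _ hS _ hT _ _ ha hb _ => (hS.smul ha).add (hT.smul hb)

lemma convex_posDef : Convex ℝ {B : Matrix ι ι 𝕜 | B.PosDef} :=
  convex_iff_forall_pos.2 fun _ hS _ hT _ _ ha hb _ => (hS.smul ha).add (hT.smul hb)

variable [Fintype ι]

noncomputable def reQuadForm (v : ι → 𝕜) : Matrix ι ι 𝕜 →ₗ[ℝ] ℝ where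
  toFun A := RCLike.re (star v ⬝ᵥ (A *ᵥ v))
  map_add' A B := by simp [add_mulVec, dotProduct_add]
  map_smul' r A := by simp [smul_mulVec, dotProduct_smul, RCLike.smul_re]

lemma reQuadForm_apply (v : ι → 𝕜) (A : Matrix ι ι 𝕜) :
    reQuadForm v A = RCLike.re (star v ⬝ᵥ (A *ᵥ v)) := rfl

@[simp]
lemma reQuadForm_zero_left (A : Matrix ι ι 𝕜) : reQuadForm 0 A = 0 := by
  simp [reQuadForm_apply]

lemma PosSemidef.reQuadForm_nonneg {A : Matrix ι ι 𝕜} (hA : A.PosSemidef) (v : ι → 𝕜) :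
    0 ≤ reQuadForm v A :=
  hA.re_dotProduct_nonneg v

lemma IsHermitian.posSemidef_of_reQuadForm_nonneg {A : Matrix ι ι 𝕜} (hA : A.IsHermitian)
    (h : ∀ v, 0 ≤ reQuadForm v A) : A.PosSemidef :=
  .of_dotProduct_mulVec_nonneg hA fun v =>
    RCLike.nonneg_iff.2 ⟨h v, hA.im_star_dotProduct_mulVec_self v⟩

variable [DecidableEq ι]

lemma IsHermitian.reQuadForm_inv_sub_eq {B : Matrix ι ι 𝕜} (hB : B.IsHermitian)
    (hBu : IsUnit B) (u v : ι → 𝕜) :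
    reQuadForm v B⁻¹ - (2 * RCLike.re (star u ⬝ᵥ v) - reQuadForm u B) =
      reQuadForm (B⁻¹ *ᵥ v - u) B := by
  have hdet : IsUnit B.det := (isUnit_iff_isUnit_det B).1 hBu
  have hstar : star (B⁻¹ *ᵥ v) = star v ᵥ* B⁻¹ := by
    rw [star_mulVec, ← star_eq_conjTranspose, hB.inv.star_eq]
  have hvu : RCLike.re (star v ⬝ᵥ u) = RCLike.re (star u ⬝ᵥ v) := by
    rw [star_dotProduct, RCLike.star_def, RCLike.conj_re]
  simp only [reQuadForm_apply, mulVec_sub, mulVec_mulVec, mul_nonsing_inv B hdet, one_mulVec,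
    star_sub, sub_dotProduct, dotProduct_sub, map_sub, hstar, ← dotProduct_mulVec,
    nonsing_inv_mul B hdet, hvu]
  ring

lemma PosDef.two_mul_re_dotProduct_sub_reQuadForm_le {B : Matrix ι ι 𝕜} (hB : B.PosDef)
    (u v : ι → 𝕜) : 2 * RCLike.re (star u ⬝ᵥ v) - reQuadForm u B ≤ reQuadForm v B⁻¹ := by
  linarith [hB.1.reQuadForm_inv_sub_eq hB.isUnit u v,
    hB.posSemidef.reQuadForm_nonneg (B⁻¹ *ᵥ v - u)]

lemma IsHermitian.reQuadForm_inv_eq {B : Matrix ι ι 𝕜} (hB : B.IsHermitian) (hBu : IsUnit B)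
    (v : ι → 𝕜) :
    reQuadForm v B⁻¹ = 2 * RCLike.re (star (B⁻¹ *ᵥ v) ⬝ᵥ v) - reQuadForm (B⁻¹ *ᵥ v) B := by
  have := hB.reQuadForm_inv_sub_eq hBu (B⁻¹ *ᵥ v) v
  rw [sub_self, reQuadForm_zero_left] at this
  linarith

lemma convexOn_reQuadForm_inv (v : ι → 𝕜) :
    ConvexOn ℝ {B : Matrix ι ι 𝕜 | B.PosDef} (fun B => reQuadForm v B⁻¹) := by
  refine ⟨convex_posDef, fun S hS T hT a b ha hb hab => ?_⟩
  have hM : (a • S + b • T).PosDef := convex_posDef hS hT ha hb hab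
  set u := (a • S + b • T)⁻¹ *ᵥ v
  have hSu := mul_le_mul_of_nonneg_left (hS.two_mul_re_dotProduct_sub_reQuadForm_le u v) ha
  have hTu := mul_le_mul_of_nonneg_left (hT.two_mul_re_dotProduct_sub_reQuadForm_le u v) hb
  obtain rfl : b = 1 - a := by linarith
  simp only [smul_eq_mul, hM.1.reQuadForm_inv_eq hM.isUnit v, map_add, map_smul]
  linarith

lemma IsHermitian.reQuadForm_cfc {A : Matrix ι ι 𝕜} (hA : A.IsHermitian) (f : ℝ → ℝ)
    (v : ι → 𝕜) :
    reQuadForm v (cfc f A) =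
      ∑ i, f (hA.eigenvalues i) * ‖(star (hA.eigenvectorUnitary : Matrix ι ι 𝕜) *ᵥ v) i‖ ^ 2 := by
  set U : Matrix ι ι 𝕜 := ↑hA.eigenvectorUnitary
  have hw : star v ᵥ* U = star (star U *ᵥ v) := by
    rw [star_mulVec, star_eq_conjTranspose, conjTranspose_conjTranspose]
  rw [reQuadForm_apply, hA.cfc_eq, IsHermitian.cfc, Unitary.conjStarAlgAut_apply,
    ← mulVec_mulVec, ← mulVec_mulVec, dotProduct_mulVec, hw]
  simp only [dotProduct, mulVec_diagonal, Pi.star_apply, map_sum, Function.comp_apply]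
  refine Finset.sum_congr rfl fun i _ => ?_
  rw [mul_left_comm, RCLike.star_def, RCLike.conj_mul, ← RCLike.ofReal_pow, ← RCLike.ofReal_mul,
    RCLike.ofReal_re]

section Integral

variable {α : Type*} [MeasurableSpace α] {μ : Measure α} {g : ℝ → α → ℝ}

lemma PosSemidef.integrable_reQuadForm_cfc {A : Matrix ι ι 𝕜} (hA : A.PosSemidef)
    (hg : ∀ x, 0 ≤ x → Integrable (g x) μ) (v : ι → 𝕜) :
    Integrable (fun t => reQuadForm v (cfc (g · t) A)) μ := by
  simp only [hA.1.reQuadForm_cfc]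
  exact integrable_finsetSum _ fun i _ => (hg _ (hA.eigenvalues_nonneg i)).mul_const _

lemma PosSemidef.reQuadForm_cfc_eq_integral {A : Matrix ι ι 𝕜} (hA : A.PosSemidef)
    {f : ℝ → ℝ} (hg : ∀ x, 0 ≤ x → Integrable (g x) μ)
    (hfg : ∀ x, 0 ≤ x → f x = ∫ t, g x t ∂μ) (v : ι → 𝕜) :
    reQuadForm v (cfc f A) = ∫ t, reQuadForm v (cfc (g · t) A) ∂μ := by
  simp only [hA.1.reQuadForm_cfc]
  rw [integral_finsetSum _ fun i _ => (hg _ (hA.eigenvalues_nonneg i)).mul_const _]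
  refine Finset.sum_congr rfl fun i _ => ?_
  rw [integral_mul_const, hfg _ (hA.eigenvalues_nonneg i)]

end Integral

lemma PosSemidef.nonneg_of_mem_spectrum {A : Matrix ι ι 𝕜} (hA : A.PosSemidef) {x : ℝ}
    (hx : x ∈ spectrum ℝ A) : 0 ≤ x := by
  rw [hA.1.spectrum_real_eq_range_eigenvalues] at hx
  obtain ⟨i, rfl⟩ := hx
  exact hA.eigenvalues_nonneg i

lemma PosSemidef.cfc_const_add_inv {A : Matrix ι ι 𝕜} (hA : A.PosSemidef) {t : ℝ} (ht : 0 < t) :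
    cfc (fun x => (t + x)⁻¹) A = (algebraMap ℝ _ t + A)⁻¹ := by
  have : IsSelfAdjoint A := hA.1.isSelfAdjoint
  rw [cfc_inv (fun x => t + x) A fun x hx => by linarith [hA.nonneg_of_mem_spectrum hx],
    cfc_const_add t _ A, cfc_id' ℝ A, nonsing_inv_eq_ringInverse]

lemma PosSemidef.cfc_xLogXKernel {A : Matrix ι ι 𝕜} (hA : A.PosSemidef) {t : ℝ} (ht : 0 < t) :
    cfc (xLogXKernel · t) A = (1 + t)⁻¹ • A - 1 + t • (algebraMap ℝ _ t + A)⁻¹ := by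
  have : IsSelfAdjoint A := hA.1.isSelfAdjoint
  have hcont := fun f : ℝ → ℝ => A.finite_real_spectrum.continuousOn f
  rw [cfc_congr fun x hx => xLogXKernel_eq (hA.nonneg_of_mem_spectrum hx) ht,
    cfc_add (a := A) _ _ (hcont _) (hcont _), cfc_sub (a := A) _ _ (hcont _) (hcont _),
    cfc_const_mul_id _ A, cfc_const_one ℝ A, cfc_const_mul _ _ A (hcont _),
    hA.cfc_const_add_inv ht]

lemma convexOn_reQuadForm_cfc_xLogXKernel (v : ι → 𝕜) {t : ℝ} (ht : 0 < t) :
    ConvexOn ℝ {A : Matrix ι ι 𝕜 | A.PosSemidef}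
      (fun A => reQuadForm v (cfc (xLogXKernel · t) A)) := by
  have hlin := ((reQuadForm v).convexOn convex_posSemidef).smul
    (inv_nonneg.2 (by linarith : (0 : ℝ) ≤ 1 + t))
  have hconst := convexOn_const (-reQuadForm v 1) (convex_posSemidef (𝕜 := 𝕜) (ι := ι))
  have hres := (((convexOn_reQuadForm_inv v).translate_right (algebraMap ℝ (Matrix ι ι 𝕜) t)).subset
    (fun A (hA : A.PosSemidef) => by
      simpa [Algebra.algebraMap_eq_smul_one] using (PosDef.one.smul ht).add_posSemidef hA)
    convex_posSemidef).smul ht.le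
  refine ((hlin.add hconst).add hres).congr fun A (hA : A.PosSemidef) => ?_
  simp [hA.cfc_xLogXKernel ht, sub_eq_add_neg]

lemma convexOn_reQuadForm_cfc_xLogX (v : ι → 𝕜) :
    ConvexOn ℝ {A : Matrix ι ι 𝕜 | A.PosSemidef}
      (fun A => reQuadForm v (cfc (fun x => x * log x) A)) :=
  (convexOn_integral convex_posSemidef
    (ae_restrict_of_forall_mem measurableSet_Ioi fun _ ht =>
      convexOn_reQuadForm_cfc_xLogXKernel v ht)
    fun _ hA => hA.integrable_reQuadForm_cfc (fun _ hx => integrableOn_xLogXKernel hx) v).congr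
    fun _ hA => (hA.reQuadForm_cfc_eq_integral (fun _ hx => integrableOn_xLogXKernel hx)
      (fun _ hx => (integral_xLogXKernel hx).symm) v).symm

end Matrix

/-- The function `f x = x * log x` (with `f 0 = 0`) is operator convex on `[0, ∞)`:
for positive semidefinite matrices `S`, `T` and `0 ≤ c ≤ 1`,
`f (c • S + (1 - c) • T) ≤ c • f S + (1 - c) • f T` in the Loewner order. -/
theorem xLogX_operator_convex (n : ℕ) (S T : Matrix (Fin n) (Fin n) ℂ)
    (hS : S.PosSemidef) (hT : T.PosSemidef) (c : ℝ) (hc0 : 0 ≤ c) (hc1 : c ≤ 1) :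
    (c • cfc (fun x : ℝ => x * Real.log x) S + (1 - c) • cfc (fun x : ℝ => x * Real.log x) T
      - cfc (fun x : ℝ => x * Real.log x) (c • S + (1 - c) • T)).PosSemidef := by
  have hF (A : Matrix (Fin n) (Fin n) ℂ) : IsSelfAdjoint (cfc (fun x : ℝ => x * Real.log x) A) :=
    cfc_predicate _ A
  refine IsHermitian.posSemidef_of_reQuadForm_nonneg
    ((((IsSelfAdjoint.all c).smul (hF S)).add ((IsSelfAdjoint.all _).smul (hF T))).sub (hF _))
    fun v => ?_
  have := (convexOn_reQuadForm_cfc_xLogX v).2 hS hT hc0 (sub_nonneg.2 hc1) (by ring)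
  simp only [map_sub, map_add, map_smul, smul_eq_mul] at this ⊢
  linarith
end

section
/- For 0 < s < 1, the function f(t) = -tˢ is operator convex on [0,∞): for positive semidefinite n×n matrices S, T and 0 ≤ c ≤ 1, -(cS+(1-c)T)ˢ ≤ -c·Sˢ - (1-c)·Tˢ in the Loewner order (equivalently, t ↦ tˢ is operator concave). -/
open Matrix ComplexOrder

open scoped MatrixOrder Matrix.Norms.L2Operator

/-- For `0 < s < 1`, the function `f t = -tˢ` is operator convex on `[0, ∞)`
(equivalently, `t ↦ tˢ` is operator concave): for positive semidefinite `S`, `T` and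
`0 ≤ c ≤ 1`, `(c • S + (1 - c) • T)ˢ ≥ c • Sˢ + (1 - c) • Tˢ` in the Loewner order. -/
theorem neg_rpow_operator_convex (n : ℕ) (s : ℝ) (hs0 : 0 < s) (hs1 : s < 1)
    (S T : Matrix (Fin n) (Fin n) ℂ)
    (hS : S.PosSemidef) (hT : T.PosSemidef) (c : ℝ) (hc0 : 0 ≤ c) (hc1 : c ≤ 1) :
    (cfc (fun x : ℝ => x ^ s) (c • S + (1 - c) • T)
      - (c • cfc (fun x : ℝ => x ^ s) S + (1 - c) • cfc (fun x : ℝ => x ^ s) T)).PosSemidef := by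
  have hc1' : 0 ≤ 1 - c := sub_nonneg.2 hc1
  have hM : (c • S + (1 - c) • T).PosSemidef := (hS.smul hc0).add (hT.smul hc1')
  have hconcave : c • S ^ s + (1 - c) • T ^ s ≤ (c • S + (1 - c) • T) ^ s :=
    (CFC.concaveOn_rpow ⟨hs0.le, hs1.le⟩).2 hS.nonneg hT.nonneg hc0 hc1' (add_sub_cancel c 1)
  rwa [CFC.rpow_eq_cfc_real hS.nonneg, CFC.rpow_eq_cfc_real hT.nonneg,
    CFC.rpow_eq_cfc_real hM.nonneg] at hconcave
end
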